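/- Define the maps φ, f₂, f₄ : ℂ³ → ℂ³ by φ(x,y,z) = (x², (y+z)², (y−z)²), f₂(x,y,z) = (2x(y−z), (y+z)², x² − 4yz) and f₄(x,y,z) = (4xz, (x+z)², (x−2y+z)²). Then φ ∘ f₂ = f₄ ∘ φ, i.e., for all (x,y,z) ∈ ℂ³ the two sides agree coordinatewise. (All three maps are given by homogeneous quadratic polynomials, so this identity expresses that the Lattès map on ℙ² induced by f₄ is semi-conjugate via the degree-2 map induced by φ to the Ueda map induced by f₂.) -/

import Mathlib

noncomputable section

/-- `φ(x,y,z) = (x², (y+z)², (y−z)²)`. -/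
def phi : ℂ × ℂ × ℂ → ℂ × ℂ × ℂ :=
  fun p => (p.1 ^ 2, (p.2.1 + p.2.2) ^ 2, (p.2.1 - p.2.2) ^ 2)

/-- `f₂(x,y,z) = (2x(y−z), (y+z)², x² − 4yz)`. -/
def f₂ : ℂ × ℂ × ℂ → ℂ × ℂ × ℂ :=
  fun p => (2 * p.1 * (p.2.1 - p.2.2), (p.2.1 + p.2.2) ^ 2, p.1 ^ 2 - 4 * p.2.1 * p.2.2)

/-- `f₄(x,y,z) = (4xz, (x+z)², (x−2y+z)²)`. -/
def f₄ : ℂ × ℂ × ℂ → ℂ × ℂ × ℂ :=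
  fun p => (4 * p.1 * p.2.2, (p.1 + p.2.2) ^ 2, (p.1 - 2 * p.2.1 + p.2.2) ^ 2)

theorem stmt17 : phi ∘ f₂ = f₄ ∘ phi := by
  funext ⟨x, y, z⟩
  simp only [Function.comp_apply, phi, f₂, f₄, Prod.mk.injEq]
  exact ⟨by ring, by ring, by ring⟩
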